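/- arXiv:2003.05296 — 2 statements merged into one kernel-verified Lean document; each statement's English description precedes it below -/
import Mathlib

section
/- Let p = 4k+3 be a prime and R a commutative ring of characteristic 2. For any a_i, b_i, c_i, a_j, b_j, c_j ∈ R, Q_p(a_i,b_i,c_i) · Q_p(a_j,b_j,c_j)^T = Q_p( a_i a_j + b_i b_j + c_i c_j , (a_i c_j + b_i a_j) + k (b_i b_j + c_i c_j) + k b_i c_j + (k+1) c_i b_j , (a_i b_j + c_i a_j) + k (b_i b_j + c_i c_j) + (k+1) b_i c_j + k c_i b_j ). -/
/-!
Write `Qmat p a b c = a • 1 + b • S + c • N` with `S = Qmat p 0 1 0` and `N = Qmat p 0 0 1`.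
As `p ≡ 3 (mod 4)`, `-1` is a non-square, so transposition swaps `S` and `N`, and everything
reduces to the products of `S` and `N`. Over `ℤ`, `2S = J - 1 + C` and `2N = J - 1 - C`, where
`J = Qmat p 1 1 1` is the all-ones matrix and `C = Qmat p 0 1 (-1)` is the Jacobsthal matrix
`(χ (j - i))` of the quadratic character `χ`. Character sums give `J² = pJ`, `CJ = JC = 0` and,
via the Jacobi sum `jacobiSum χ χ = -χ (-1)`, `C² = χ (-1) (p - J)`. This fixes `4 S²`, `4 SN`, …
over `ℤ`, hence the products themselves, which then carry over to any commutative ring. In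
characteristic `2` the diagonal coefficient `2k + 1` becomes `1`.
-/

open Matrix
open scoped Classical

/-- The quadratic residue circulant matrix `Q_p(a,b,c)`: the `p × p` matrix over `R`,
indexed by `ZMod p`, whose `(i,j)` entry is `a` if `i = j`, `b` if `j - i` is a
nonzero quadratic residue modulo `p`, and `c` otherwise. -/
noncomputable def Qmat (p : ℕ) {R : Type*} [CommRing R] (a b c : R) :
    Matrix (ZMod p) (ZMod p) R :=
  Matrix.of fun i j => if i = j then a else if IsSquare (j - i) then b else c

open Finset

section QuadraticChar
variable {F : Type*} [Field F] [Fintype F] [DecidableEq F]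

theorem isSquare_neg_iff_not_isSquare (h : ¬IsSquare (-1 : F)) {x : F} (hx : x ≠ 0) :
    IsSquare (-x) ↔ ¬IsSquare x := by
  rw [← quadraticChar_one_iff_isSquare (neg_ne_zero.mpr hx),
    ← quadraticChar_neg_one_iff_not_isSquare, neg_eq_neg_one_mul, map_mul,
    quadraticChar_neg_one_iff_not_isSquare.mpr h]
  constructor <;> intro hχ <;> linarith

theorem sum_quadraticChar_sub_mul_quadraticChar_sub_of_ne (hF : ringChar F ≠ 2) {a b : F}
    (hab : a ≠ b) :
    ∑ x, quadraticChar F (x - a) * quadraticChar F (b - x) = -quadraticChar F (-1) := by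
  set χ := quadraticChar F
  have hd : b - a ≠ 0 := sub_ne_zero.mpr hab.symm
  let e : F ≃ F := (Equiv.mulLeft₀ (b - a) hd).trans (Equiv.addRight a)
  have hχd : χ (b - a) * χ (b - a) = 1 := by
    rw [← sq]; exact quadraticChar_sq_one hd
  calc ∑ x, χ (x - a) * χ (b - x) = ∑ y, χ (e y - a) * χ (b - e y) :=
        (Fintype.sum_equiv e _ _ fun _ => rfl).symm
    _ = ∑ y, χ y * χ (1 - y) := by
        refine Fintype.sum_congr _ _ fun y => ?_
        have h1 : e y - a = (b - a) * y := by simp [e]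
        have h2 : b - e y = (b - a) * (1 - y) := by simp [e]; ring
        rw [h1, h2, map_mul, map_mul]
        linear_combination (χ y * χ (1 - y)) * hχd
    _ = jacobiSum χ χ⁻¹ := by rw [(quadraticChar_isQuadratic F).inv]; rfl
    _ = -χ (-1) := jacobiSum_nontrivial_inv (quadraticChar_ne_one hF)

theorem sum_quadraticChar_sub_mul_quadraticChar_sub_self (a : F) :
    ∑ x, quadraticChar F (x - a) * quadraticChar F (a - x) =
      quadraticChar F (-1) * (Fintype.card F - 1) := by
  set χ := quadraticChar F
  have hterm : ∀ x, χ (x - a) * χ (a - x) = χ (-1) * (1 - if x = a then 1 else 0) := by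
    intro x
    rw [show a - x = -1 * (x - a) by ring, map_mul]
    split_ifs with hx
    · simp [hx, χ]
    · have := quadraticChar_sq_one (F := F) (sub_ne_zero.mpr hx)
      linear_combination χ (-1) * this
  simp [hterm, ← mul_sum, sum_sub_distrib]

end QuadraticChar

section Algebra
variable {p : ℕ} {R : Type*} [CommRing R]

theorem Qmat_eq_smul_add (a b c : R) :
    Qmat p a b c = a • 1 + b • Qmat p 0 1 0 + c • Qmat p 0 0 1 := by
  ext i j
  by_cases hij : i = j <;> by_cases hsq : IsSquare (j - i) <;> simp [Qmat, one_apply, hij, hsq]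

theorem Qmat_add_Qmat (a b c a' b' c' : R) :
    Qmat p a b c + Qmat p a' b' c' = Qmat p (a + a') (b + b') (c + c') := by
  ext i j
  simp only [Qmat, Matrix.add_apply, of_apply]
  split_ifs <;> rfl

theorem smul_Qmat (r a b c : R) : r • Qmat p a b c = Qmat p (r * a) (r * b) (r * c) := by
  ext i j
  simp only [Qmat, Matrix.smul_apply, of_apply, smul_eq_mul]
  split_ifs <;> rfl

theorem Qmat_one_zero_zero : Qmat p (1 : R) 0 0 = 1 := by
  simp [Qmat_eq_smul_add (1 : R) 0 0]

theorem two_smul_Qmat (a b c : R) :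
    (2 : R) • Qmat p a b c =
      (2 * a - b - c) • 1 + (b + c) • Qmat p 1 1 1 + (b - c) • Qmat p 0 1 (-1) := by
  rw [Qmat_eq_smul_add a, Qmat_eq_smul_add (1 : R) 1 1, Qmat_eq_smul_add (0 : R) 1 (-1)]
  module

theorem Qmat_map {S : Type*} [CommRing S] (f : R →+* S) (a b c : R) :
    (Qmat p a b c).map f = Qmat p (f a) (f b) (f c) := by
  ext i j
  simp only [Qmat, map_apply, of_apply]
  split_ifs <;> rfl

theorem Qmat_one_one_one_mul_self [NeZero p] :
    Qmat p (1 : R) 1 1 * Qmat p 1 1 1 = (p : R) • Qmat p 1 1 1 := by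
  ext i j
  simp [Qmat, mul_apply]

theorem Qmat_transpose [Fact p.Prime] (hp : ¬IsSquare (-1 : ZMod p)) (a b c : R) :
    (Qmat p a b c)ᵀ = Qmat p a c b := by
  ext i j
  by_cases hij : i = j
  · simp [Qmat, hij]
  · have hsq := isSquare_neg_iff_not_isSquare hp (sub_ne_zero.mpr (Ne.symm hij))
    rw [neg_sub] at hsq
    by_cases h : IsSquare (j - i) <;> simp [Qmat, hij, Ne.symm hij, h, hsq]

end Algebra

section Jacobsthal
variable {p : ℕ} [Fact p.Prime]

theorem Qmat_zero_one_neg_one_apply (i j : ZMod p) :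
    Qmat p (0 : ℤ) 1 (-1) i j = quadraticChar (ZMod p) (j - i) := by
  simp only [Qmat, of_apply, quadraticChar_apply, quadraticCharFun, sub_eq_zero,
    eq_comm (a := j)]
  split_ifs <;> rfl

theorem sum_quadraticChar_eq_zero (hp : p ≠ 2) : ∑ x : ZMod p, quadraticChar (ZMod p) x = 0 :=
  quadraticChar_sum_zero (by rwa [ZMod.ringChar_zmod_n])

theorem Qmat_zero_one_neg_one_mul_Qmat_one_one_one (hp : p ≠ 2) :
    Qmat p (0 : ℤ) 1 (-1) * Qmat p 1 1 1 = 0 := by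
  ext i j
  have hJ : ∀ l, Qmat p (1 : ℤ) 1 1 l j = 1 := by intro l; simp [Qmat]
  simp only [mul_apply, Qmat_zero_one_neg_one_apply, hJ, mul_one, Matrix.zero_apply]
  rw [← sum_quadraticChar_eq_zero hp]
  exact Fintype.sum_equiv (Equiv.subRight i) _ _ fun _ => rfl

theorem Qmat_one_one_one_mul_Qmat_zero_one_neg_one (hp : p ≠ 2) :
    Qmat p 1 1 1 * Qmat p (0 : ℤ) 1 (-1) = 0 := by
  ext i j
  have hJ : ∀ l, Qmat p (1 : ℤ) 1 1 i l = 1 := by intro l; simp [Qmat]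
  simp only [mul_apply, Qmat_zero_one_neg_one_apply, hJ, one_mul, Matrix.zero_apply]
  rw [← sum_quadraticChar_eq_zero hp]
  exact Fintype.sum_equiv (Equiv.subLeft j) _ _ fun _ => rfl

theorem Qmat_zero_one_neg_one_mul_self (hp : p ≠ 2) :
    Qmat p (0 : ℤ) 1 (-1) * Qmat p 0 1 (-1) =
      quadraticChar (ZMod p) (-1) • ((p : ℤ) • 1 - Qmat p 1 1 1) := by
  have hF : ringChar (ZMod p) ≠ 2 := by rwa [ZMod.ringChar_zmod_n]
  ext i j
  have hJ : Qmat p (1 : ℤ) 1 1 i j = 1 := by simp [Qmat]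
  simp only [mul_apply, Qmat_zero_one_neg_one_apply, Matrix.smul_apply, Matrix.sub_apply, hJ,
    one_apply, smul_eq_mul]
  by_cases hij : i = j
  · subst hij
    rw [sum_quadraticChar_sub_mul_quadraticChar_sub_self, ZMod.card, if_pos rfl, mul_one]
  · rw [sum_quadraticChar_sub_mul_quadraticChar_sub_of_ne hF hij, if_neg hij]
    ring

theorem Qmat_mul_Qmat_of_int {k : ℕ} (hpk : p = 4 * k + 3) (a b c a' b' c' : ℤ) :
    Qmat p a b c * Qmat p a' b' c' =
      Qmat p (a * a' + (2 * k + 1) * (b * c' + c * b'))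
        (a * b' + b * a' + k * (b * b') + (k + 1) * (c * c') + k * (b * c' + c * b'))
        (a * c' + c * a' + (k + 1) * (b * b') + k * (c * c') + k * (b * c' + c * b')) := by
  have hp : p ≠ 2 := by omega
  have hχ : quadraticChar (ZMod p) (-1) = -1 := by
    rw [quadraticChar_neg_one_iff_not_isSquare, ZMod.exists_sq_eq_neg_one_iff]
    omega
  apply smul_right_injective _ (four_ne_zero' ℤ)
  dsimp only
  rw [show (4 : ℤ) = 2 * 2 by norm_num, ← smul_mul_smul_comm, mul_smul, two_smul_Qmat,
    two_smul_Qmat, two_smul_Qmat]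
  simp only [add_mul, mul_add, smul_mul_assoc, mul_smul_comm, one_mul, mul_one,
    Qmat_one_one_one_mul_self, Qmat_zero_one_neg_one_mul_Qmat_one_one_one hp,
    Qmat_one_one_one_mul_Qmat_zero_one_neg_one hp, Qmat_zero_one_neg_one_mul_self hp, hχ, hpk]
  push_cast
  module

end Jacobsthal

section Product
variable {p : ℕ} [Fact p.Prime] {R : Type*} [CommRing R]

theorem Qmat_mul_Qmat {k : ℕ} (hpk : p = 4 * k + 3) (a b c a' b' c' : R) :
    Qmat p a b c * Qmat p a' b' c' =
      Qmat p (a * a' + (2 * k + 1) * (b * c' + c * b'))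
        (a * b' + b * a' + k * (b * b') + (k + 1) * (c * c') + k * (b * c' + c * b'))
        (a * c' + c * a' + (k + 1) * (b * b') + k * (c * c') + k * (b * c' + c * b')) := by
  have hcast : ∀ u v w u' v' w' : ℤ, Qmat p (u : R) v w * Qmat p (u' : R) v' w' =
      (Qmat p u v w * Qmat p u' v' w').map (Int.castRingHom R) := by
    intros
    rw [Matrix.map_mul, Qmat_map, Qmat_map]
    rfl
  have hSS := hcast 0 1 0 0 1 0
  have hSN := hcast 0 1 0 0 0 1
  have hNS := hcast 0 0 1 0 1 0
  have hNN := hcast 0 0 1 0 0 1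
  simp only [Qmat_mul_Qmat_of_int hpk, Qmat_map, eq_intCast] at hSS hSN hNS hNN
  push_cast at hSS hSN hNS hNN
  simp only [mul_zero, mul_one, add_zero, zero_add] at hSS hSN hNS hNN
  rw [Qmat_eq_smul_add a b c, Qmat_eq_smul_add a' b' c']
  simp only [add_mul, mul_add, smul_mul_assoc, mul_smul_comm, one_mul, mul_one, hSS, hSN, hNS, hNN]
  rw [← Qmat_one_zero_zero]
  simp only [smul_Qmat, Qmat_add_Qmat]
  congr 1 <;> ring

end Product

theorem stmt1 {R : Type*} [CommRing R] [CharP R 2] (p k : ℕ) [Fact (Nat.Prime p)]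
    (hpk : p = 4 * k + 3) (ai bi ci aj bj cj : R) :
    Qmat p ai bi ci * (Qmat p aj bj cj)ᵀ =
      Qmat p (ai * aj + bi * bj + ci * cj)
        ((ai * cj + bi * aj) + (k : R) * (bi * bj + ci * cj) + (k : R) * (bi * cj) +
          ((k : R) + 1) * (ci * bj))
        ((ai * bj + ci * aj) + (k : R) * (bi * bj + ci * cj) + ((k : R) + 1) * (bi * cj) +
          (k : R) * (ci * bj)) := by
  have hneg : ¬IsSquare (-1 : ZMod p) := by
    rw [ZMod.exists_sq_eq_neg_one_iff]
    omega
  have h2 : (2 : R) = 0 := CharTwo.two_eq_zero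
  rw [Qmat_transpose hneg, Qmat_mul_Qmat hpk]
  congr 1
  · linear_combination ((k : R) * (bi * bj + ci * cj)) * h2
  · ring
  · ring
end

section
/- Let p = 4k+3 be a prime and R a commutative ring of characteristic 2, and set Q = Q_p(0,1,0) and N = Q_p(0,0,1). Then Q = N^T, Q·Q^T = N·N^T = I_p + k·Q + k·N, Q·N^T = k·Q + (k+1)·N, and N·Q^T = (k+1)·Q + k·N. -/
open Matrix
open scoped Classical

open Finset

set_option linter.unusedSectionVars false
set_option maxHeartbeats 1000000


section Aux

variable (p : ℕ) [Fact (Nat.Prime p)]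

local notation "χ" => quadraticChar (ZMod p)

private lemma tri (a : ZMod p) : χ a = 0 ∨ χ a = 1 ∨ χ a = -1 := by
  by_cases h : a = 0
  · exact Or.inl (by simp [h])
  · exact Or.inr (quadraticChar_dichotomy h)

variable (k : ℕ) (hpk : p = 4 * k + 3)
include hpk

private lemma ringChar_ne_two : ringChar (ZMod p) ≠ 2 := by
  rw [ZMod.ringChar_zmod_n]; omega

private lemma chi_neg_one : χ (-1) = -1 := by
  rw [quadraticChar_neg_one_iff_not_isSquare, ZMod.exists_sq_eq_neg_one_iff]
  omega

private lemma chi_neg (a : ZMod p) : χ (-a) = - χ a := by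
  rw [show -a = -1 * a by ring, _root_.map_mul, chi_neg_one p k hpk]; ring

private lemma sum_chi_sq : ∑ y : ZMod p, (χ y) ^ 2 = (p : ℤ) - 1 := by
  have h : ∀ y : ZMod p, (χ y) ^ 2 = 1 - (if y = 0 then 1 else 0) := by
    intro y
    by_cases h : y = 0
    · simp [h]
    · rcases quadraticChar_dichotomy h with h' | h' <;> simp [h, h'] <;> ring
  rw [Finset.sum_congr rfl fun y _ => h y, Finset.sum_sub_distrib]
  simp [Finset.sum_ite_eq', ZMod.card]

private lemma sum_shiftl (d : ZMod p) (f : ZMod p → ℤ) :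
    ∑ y : ZMod p, f (d - y) = ∑ y : ZMod p, f y :=
  Fintype.sum_equiv (Equiv.subLeft d) _ _ (fun _ => rfl)

private lemma hD (d : ZMod p) (hd : d ≠ 0) : ∑ y : ZMod p, χ y * χ (d - y) = 1 := by
  have hne : χ ≠ 1 := quadraticChar_ne_one (ringChar_ne_two p k hpk)
  have hJ : jacobiSum χ χ = 1 := by
    have h := jacobiSum_nontrivial_inv hne
    rw [(quadraticChar_isQuadratic (ZMod p)).inv] at h
    rw [h, chi_neg_one p k hpk]; ring
  have hre : ∑ y : ZMod p, χ y * χ (d - y) = ∑ x : ZMod p, χ (d * x) * χ (d - d * x) :=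
    (Fintype.sum_equiv (Equiv.mulLeft₀ d hd) _ _ (fun _ => rfl)).symm
  rw [hre]
  have : ∀ x : ZMod p, χ (d * x) * χ (d - d * x) = χ d ^ 2 * (χ x * χ (1 - x)) := by
    intro x
    rw [show d - d * x = d * (1 - x) by ring, _root_.map_mul, _root_.map_mul]; ring
  rw [Finset.sum_congr rfl fun x _ => this x, ← Finset.mul_sum]
  have : ∑ x : ZMod p, χ x * χ (1 - x) = jacobiSum χ χ := rfl
  rw [this, hJ, quadraticChar_sq_one hd, one_mul]

end Aux

section Aux2

variable (p : ℕ) [Fact (Nat.Prime p)]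

local notation "χ" => quadraticChar (ZMod p)

variable (k : ℕ) (hpk : p = 4 * k + 3)
include hpk

private lemma hA (d : ZMod p) (hd : d ≠ 0) :
    ∑ y : ZMod p, (χ y) ^ 2 * (χ (d - y)) ^ 2 = (p : ℤ) - 2 := by
  have h : ∀ y : ZMod p, (χ y) ^ 2 * (χ (d - y)) ^ 2 =
      1 - (if y = 0 then 1 else 0) - (if y = d then 1 else 0) := by
    intro y
    by_cases h0 : y = 0
    · subst h0
      have : d - 0 ≠ 0 := by simpa using hd
      rcases quadraticChar_dichotomy this with h' | h' <;>
        simp [Ne.symm hd, h'] <;> ring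
    · by_cases hdy : y = d
      · subst hdy; simp [h0]
      · have h1 : d - y ≠ 0 := sub_ne_zero.mpr (Ne.symm hdy)
        rcases quadraticChar_dichotomy h0 with h' | h' <;>
          rcases quadraticChar_dichotomy h1 with h'' | h'' <;>
            simp [h0, hdy, h', h''] <;> ring
  rw [Finset.sum_congr rfl fun y _ => h y, Finset.sum_sub_distrib, Finset.sum_sub_distrib]
  simp [Finset.sum_ite_eq', ZMod.card]
  ring

private lemma hB (d : ZMod p) (hd : d ≠ 0) :
    ∑ y : ZMod p, (χ y) ^ 2 * χ (d - y) = - χ d := by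
  have h : ∀ y : ZMod p, (χ y) ^ 2 * χ (d - y) =
      χ (d - y) - (if y = 0 then χ d else 0) := by
    intro y
    by_cases h0 : y = 0
    · simp [h0]
    · rcases quadraticChar_dichotomy h0 with h' | h' <;> simp [h0, h'] <;> ring
  rw [Finset.sum_congr rfl fun y _ => h y, Finset.sum_sub_distrib,
    sum_shiftl p k hpk d (fun y => χ y), quadraticChar_sum_zero (ringChar_ne_two p k hpk)]
  simp [Finset.sum_ite_eq']

private lemma hC (d : ZMod p) (hd : d ≠ 0) :
    ∑ y : ZMod p, χ y * (χ (d - y)) ^ 2 = - χ d := by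
  have h : ∀ y : ZMod p, χ y * (χ (d - y)) ^ 2 =
      χ y - (if y = d then χ d else 0) := by
    intro y
    by_cases h0 : y = d
    · simp [h0]
    · have h1 : d - y ≠ 0 := sub_ne_zero.mpr (Ne.symm h0)
      rcases quadraticChar_dichotomy h1 with h' | h' <;> simp [h0, h'] <;> ring
  rw [Finset.sum_congr rfl fun y _ => h y, Finset.sum_sub_distrib,
    quadraticChar_sum_zero (ringChar_ne_two p k hpk)]
  simp [Finset.sum_ite_eq']

private lemma master (d : ZMod p) (hd : d ≠ 0) (ε δ : ℤ)
    (hε : ε = 1 ∨ ε = -1) (hδ : δ = 1 ∨ δ = -1) :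
    4 * (((univ.filter fun y : ZMod p => χ y = ε ∧ χ (d - y) = δ).card : ℤ))
      = (p : ℤ) - 2 - (ε + δ) * χ d + ε * δ := by
  have key : ∀ y : ZMod p,
      ((χ y) ^ 2 + ε * χ y) * ((χ (d - y)) ^ 2 + δ * χ (d - y)) =
        if χ y = ε ∧ χ (d - y) = δ then 4 else 0 := by
    intro y
    rcases tri p y with h | h | h <;> rcases tri p (d - y) with h' | h' | h' <;>
      rcases hε with he | he <;> rcases hδ with hdd | hdd <;>
        subst he <;> subst hdd <;> simp [h, h'] <;> norm_num
  have h1 : ∑ y : ZMod p, (if χ y = ε ∧ χ (d - y) = δ then (4:ℤ) else 0)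
      = 4 * (((univ.filter fun y : ZMod p => χ y = ε ∧ χ (d - y) = δ).card : ℤ)) := by
    rw [show (4 : ℤ) * (((univ.filter fun y : ZMod p => χ y = ε ∧ χ (d - y) = δ).card : ℤ))
        = ∑ y : ZMod p, 4 * (if χ y = ε ∧ χ (d - y) = δ then (1:ℤ) else 0) by
      rw [← Finset.mul_sum, Finset.sum_boole]]
    exact Finset.sum_congr rfl fun y _ => by by_cases h : χ y = ε ∧ χ (d - y) = δ <;> simp [h]
  rw [← h1, ← Finset.sum_congr rfl fun y _ => key y]
  have expand : ∀ y : ZMod p,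
      ((χ y) ^ 2 + ε * χ y) * ((χ (d - y)) ^ 2 + δ * χ (d - y)) =
        (χ y) ^ 2 * (χ (d - y)) ^ 2 + δ * ((χ y) ^ 2 * χ (d - y))
          + ε * (χ y * (χ (d - y)) ^ 2) + ε * δ * (χ y * χ (d - y)) := fun y => by ring
  rw [Finset.sum_congr rfl fun y _ => expand y]
  rw [Finset.sum_add_distrib, Finset.sum_add_distrib, Finset.sum_add_distrib,
    ← Finset.mul_sum, ← Finset.mul_sum, ← Finset.mul_sum,
    hA p k hpk d hd, hB p k hpk d hd, hC p k hpk d hd, hD p k hpk d hd]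
  ring

end Aux2


section Aux3

variable (p : ℕ) [Fact (Nat.Prime p)]

local notation "χ" => quadraticChar (ZMod p)

variable (k : ℕ) (hpk : p = 4 * k + 3)
include hpk

private lemma chi_sub_flip (a b : ZMod p) : χ (a - b) = - χ (b - a) := by
  rw [show a - b = -(b - a) by ring, chi_neg p k hpk]

private lemma count_single (ε : ℤ) (hε : ε = 1 ∨ ε = -1) :
    (univ.filter fun y : ZMod p => χ y = ε).card = 2 * k + 1 := by
  have key : ∀ y : ZMod p, (χ y) ^ 2 + ε * χ y = if χ y = ε then 2 else 0 := by
    intro y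
    rcases tri p y with h | h | h <;> rcases hε with he | he <;> subst he <;>
      simp [h] <;> norm_num
  have h1 : ∑ y : ZMod p, ((χ y) ^ 2 + ε * χ y)
      = 2 * (((univ.filter fun y : ZMod p => χ y = ε).card : ℤ)) := by
    rw [show (2 : ℤ) * (((univ.filter fun y : ZMod p => χ y = ε).card : ℤ))
        = ∑ y : ZMod p, 2 * (if χ y = ε then (1:ℤ) else 0) by
      rw [← Finset.mul_sum, Finset.sum_boole]]
    rw [Finset.sum_congr rfl fun y _ => key y]
    exact Finset.sum_congr rfl fun y _ => by by_cases h : χ y = ε <;> simp [h]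
  have h2 : ∑ y : ZMod p, ((χ y) ^ 2 + ε * χ y) = (p : ℤ) - 1 := by
    rw [Finset.sum_add_distrib, sum_chi_sq p k hpk, ← Finset.mul_sum,
      quadraticChar_sum_zero (ringChar_ne_two p k hpk)]
    ring
  have := h1.symm.trans h2
  have hp : (p : ℤ) = 4 * k + 3 := by exact_mod_cast congrArg (Nat.cast (R := ℤ)) hpk
  omega

private lemma cnt_eq (d : ZMod p) (hd : d ≠ 0) (ε δ : ℤ)
    (hε : ε = 1 ∨ ε = -1) (hδ : δ = 1 ∨ δ = -1) :
    4 * (((univ.filter fun y : ZMod p => χ y = ε ∧ χ (d - y) = δ).card : ℤ))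
      = 4 * k + 1 - (ε + δ) * χ d + ε * δ := by
  rw [master p k hpk d hd ε δ hε hδ]
  have hp : (p : ℤ) = 4 * k + 3 := by exact_mod_cast congrArg (Nat.cast (R := ℤ)) hpk
  rw [hp]; ring

variable {R : Type*} [CommRing R] [CharP R 2]

private lemma Q_apply (i x : ZMod p) :
    Qmat p (0:R) 1 0 i x = if χ (x - i) = 1 then 1 else 0 := by
  rw [Qmat, Matrix.of_apply]
  by_cases h : i = x
  · subst h; simp
  · have hx : x - i ≠ 0 := sub_ne_zero.mpr (Ne.symm h)
    by_cases hs : IsSquare (x - i)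
    · rw [if_neg h, if_pos hs, if_pos ((quadraticChar_one_iff_isSquare hx).mpr hs)]
    · rw [if_neg h, if_neg hs, if_neg]
      rw [quadraticChar_neg_one_iff_not_isSquare.mpr hs]; norm_num

private lemma N_apply (i x : ZMod p) :
    Qmat p (0:R) 0 1 i x = if χ (x - i) = -1 then 1 else 0 := by
  rw [Qmat, Matrix.of_apply]
  by_cases h : i = x
  · subst h; simp
  · have hx : x - i ≠ 0 := sub_ne_zero.mpr (Ne.symm h)
    by_cases hs : IsSquare (x - i)
    · rw [if_neg h, if_pos hs, if_neg]
      rw [(quadraticChar_one_iff_isSquare hx).mpr hs]; norm_num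
    · rw [if_neg h, if_neg hs, if_pos (quadraticChar_neg_one_iff_not_isSquare.mpr hs)]

private lemma prod_entry (A B : Matrix (ZMod p) (ZMod p) R) (ε δ : ℤ)
    (hA : ∀ i x, A i x = if χ (x - i) = ε then 1 else 0)
    (hB : ∀ i x, B i x = if χ (x - i) = δ then 1 else 0) (i j : ZMod p) :
    (A * Bᵀ) i j =
      (((univ.filter fun y : ZMod p => χ y = ε ∧ χ (y - (j - i)) = δ).card : ℕ) : R) := by
  rw [Matrix.mul_apply]
  simp only [Matrix.transpose_apply, hA, hB, ite_zero_mul_ite_zero, one_mul]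
  rw [Finset.sum_boole]
  congr 1
  apply Finset.card_bij (fun x _ => x - i)
  · intro x hx
    simp only [Finset.mem_filter, Finset.mem_univ, true_and] at hx ⊢
    rw [show x - i - (j - i) = x - j by ring]
    exact hx
  · intro a ha b hb hab
    have : a - i + i = b - i + i := by rw [hab]
    simpa using this
  · intro y hy
    refine ⟨y + i, ?_, by ring⟩
    simp only [Finset.mem_filter, Finset.mem_univ, true_and] at hy ⊢
    rw [show y + i - i = y by ring, show y + i - j = y - (j - i) by ring]
    exact hy

private lemma lhs_val (i j : ZMod p) (ε δ : ℤ) (hε : ε = 1 ∨ ε = -1) (hδ : δ = 1 ∨ δ = -1) :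
    (((univ.filter fun y : ZMod p => χ y = ε ∧ χ (y - (j - i)) = δ).card : ℕ) : R)
      = if i = j then (if ε = δ then (1 : R) else 0)
        else if ε = δ then (k : R)
        else if χ (j - i) = ε then (k : R) else (k : R) + 1 := by
  have h2R : (2 : R) = 0 := by
    have := CharP.cast_eq_zero R 2; exact_mod_cast this
  by_cases hij : i = j
  · subst hij
    rw [if_pos rfl]
    have h0 : i - i = (0 : ZMod p) := sub_self i
    by_cases hed : ε = δ
    · subst hed
      have hfe : (univ.filter fun y : ZMod p => χ y = ε ∧ χ (y - (i - i)) = ε)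
          = univ.filter fun y : ZMod p => χ y = ε := by
        apply Finset.filter_congr
        intro y _
        simp [h0]
      rw [hfe, count_single p k hpk ε hε, if_pos rfl]
      push_cast
      rw [show ((2:R) * k + 1) = 2 * k + 1 by ring, h2R]
      ring
    · have hfe : (univ.filter fun y : ZMod p => χ y = ε ∧ χ (y - (i - i)) = δ) = ∅ := by
        apply Finset.filter_false_of_mem
        intro y _
        rintro ⟨h1, h2⟩
        rw [h0, sub_zero] at h2
        exact hed (h1.symm.trans h2)
      rw [hfe, if_neg hed]
      simp
  · have hd : j - i ≠ 0 := sub_ne_zero.mpr (Ne.symm hij)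
    have hfilter : (univ.filter fun y : ZMod p => χ y = ε ∧ χ (y - (j - i)) = δ)
        = univ.filter fun y : ZMod p => χ y = ε ∧ χ ((j - i) - y) = -δ := by
      apply Finset.filter_congr
      intro y _
      have := chi_sub_flip p k hpk y (j - i)
      constructor
      · rintro ⟨h1, h2⟩; exact ⟨h1, by rw [← h2, this]; ring⟩
      · rintro ⟨h1, h2⟩; exact ⟨h1, by rw [this, h2]; ring⟩
    rw [hfilter, if_neg hij]
    have hc := cnt_eq p k hpk (j - i) hd ε (-δ) hε
      (by rcases hδ with rfl | rfl <;> norm_num)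
    set c := (univ.filter fun y : ZMod p => χ y = ε ∧ χ ((j - i) - y) = -δ).card with hcdef
    rcases hε with rfl | rfl <;> rcases hδ with rfl | rfl <;>
      rcases quadraticChar_dichotomy hd with hval | hval <;>
      rw [hval] at hc <;> norm_num at hval hc ⊢ <;> try simp only [hval]
    all_goals try norm_num
    all_goals
      first
        | (rw [show c = k by omega])
        | (rw [show c = k + 1 by omega]; push_cast; ring)
    
end Aux3


theorem stmt3 {R : Type*} [CommRing R] [CharP R 2] (p k : ℕ) [Fact (Nat.Prime p)]
    (hpk : p = 4 * k + 3) :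
    Qmat p (0 : R) 1 0 = (Qmat p (0 : R) 0 1)ᵀ ∧
    Qmat p (0 : R) 1 0 * (Qmat p (0 : R) 1 0)ᵀ =
      (1 : Matrix (ZMod p) (ZMod p) R) + (k : R) • Qmat p (0 : R) 1 0 +
        (k : R) • Qmat p (0 : R) 0 1 ∧
    Qmat p (0 : R) 0 1 * (Qmat p (0 : R) 0 1)ᵀ =
      (1 : Matrix (ZMod p) (ZMod p) R) + (k : R) • Qmat p (0 : R) 1 0 +
        (k : R) • Qmat p (0 : R) 0 1 ∧
    Qmat p (0 : R) 1 0 * (Qmat p (0 : R) 0 1)ᵀ =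
      (k : R) • Qmat p (0 : R) 1 0 + ((k : R) + 1) • Qmat p (0 : R) 0 1 ∧
    Qmat p (0 : R) 0 1 * (Qmat p (0 : R) 1 0)ᵀ =
      ((k : R) + 1) • Qmat p (0 : R) 1 0 + (k : R) • Qmat p (0 : R) 0 1 := by
  refine ⟨?_, ?_, ?_, ?_, ?_⟩
  · ext i j
    rw [Matrix.transpose_apply, Q_apply p k hpk, N_apply p k hpk,
      chi_sub_flip p k hpk i j]
    rcases tri p (j - i) with h | h | h <;> simp [h] <;> norm_num
  · ext i j
    rw [prod_entry p k hpk _ _ 1 1 (Q_apply p k hpk) (Q_apply p k hpk) i j,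
      lhs_val p k hpk i j 1 1 (Or.inl rfl) (Or.inl rfl)]
    simp only [Matrix.add_apply, Matrix.smul_apply, Matrix.one_apply,
      Q_apply p k hpk, N_apply p k hpk, smul_eq_mul]
    by_cases hij : i = j
    · subst hij; simp
    · have hd : j - i ≠ 0 := sub_ne_zero.mpr (Ne.symm hij)
      rcases quadraticChar_dichotomy hd with h | h <;> simp [hij, h] <;> norm_num
  · ext i j
    rw [prod_entry p k hpk _ _ (-1) (-1) (N_apply p k hpk) (N_apply p k hpk) i j,
      lhs_val p k hpk i j (-1) (-1) (Or.inr rfl) (Or.inr rfl)]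
    simp only [Matrix.add_apply, Matrix.smul_apply, Matrix.one_apply,
      Q_apply p k hpk, N_apply p k hpk, smul_eq_mul]
    by_cases hij : i = j
    · subst hij; simp
    · have hd : j - i ≠ 0 := sub_ne_zero.mpr (Ne.symm hij)
      rcases quadraticChar_dichotomy hd with h | h <;> simp [hij, h] <;> norm_num
  · ext i j
    rw [prod_entry p k hpk _ _ 1 (-1) (Q_apply p k hpk) (N_apply p k hpk) i j,
      lhs_val p k hpk i j 1 (-1) (Or.inl rfl) (Or.inr rfl)]
    simp only [Matrix.add_apply, Matrix.smul_apply,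
      Q_apply p k hpk, N_apply p k hpk, smul_eq_mul]
    by_cases hij : i = j
    · subst hij; simp
    · have hd : j - i ≠ 0 := sub_ne_zero.mpr (Ne.symm hij)
      rcases quadraticChar_dichotomy hd with h | h <;> simp [hij, h] <;> norm_num
  · ext i j
    rw [prod_entry p k hpk _ _ (-1) 1 (N_apply p k hpk) (Q_apply p k hpk) i j,
      lhs_val p k hpk i j (-1) 1 (Or.inr rfl) (Or.inl rfl)]
    simp only [Matrix.add_apply, Matrix.smul_apply,
      Q_apply p k hpk, N_apply p k hpk, smul_eq_mul]
    by_cases hij : i = j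
    · subst hij; simp
    · have hd : j - i ≠ 0 := sub_ne_zero.mpr (Ne.symm hij)
      rcases quadraticChar_dichotomy hd with h | h <;> simp [hij, h] <;> norm_num
end
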